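/- The set D := {(v₁,v₂,v₃,w₁,w₂,w₃) ∈ ℝ⁶ : v₁+v₂+v₃ = 1, w₁+w₂+w₃ = 1, v₁w₁ − v₂w₂ + v₃w₃ = 0, and v₁,v₂,v₃,w₁,w₂,w₃ ≥ 0} is homeomorphic to a closed 3-dimensional ball (i.e., to the closed unit ball in ℝ³). -/

import Mathlib

/-!
In the coordinates `q = v₁ - v₃`, `d = w₁ - w₃`, `s = v₃` the flag relation is linear in `w₂`
once `v` is fixed, so `D` becomes the region between two continuous graphs
`flagBot (q, d) ≤ s ≤ flagTop (q, d)` over the hexagon `|q|, |d|, |q + d| ≤ 1`. The two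
graphs meet exactly over the boundary of the hexagon, so rescaling each fibre affinely onto
`[-(1 - μ), 1 - μ]`, where `μ` is the hexagonal norm, identifies `D` with the double cone
`μ(q, d) + |t| ≤ 1` over the hexagon. That cone is a compact convex body, hence a closed ball.
-/

/-- The realization in `ℝ⁶` of the totally nonnegative part of the complete flag variety
of `SL₃(ℝ)`: points `(v₁, v₂, v₃, w₁, w₂, w₃)` with `v₁ + v₂ + v₃ = 1`,
`w₁ + w₂ + w₃ = 1`, `v₁w₁ - v₂w₂ + v₃w₃ = 0`, and all coordinates nonnegative. -/
def tnnFlag : Set (EuclideanSpace ℝ (Fin 6)) :=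
  {x | x 0 + x 1 + x 2 = 1 ∧ x 3 + x 4 + x 5 = 1 ∧
    x 0 * x 3 - x 1 * x 4 + x 2 * x 5 = 0 ∧ ∀ i, 0 ≤ x i}

open Set Filter Topology

noncomputable section

section FiberRescale

variable {X : Type*}

/- Over a point with `a x = 0` the fibre is `{0}`, and division by zero returns the right
value `0`. -/
def fiberRescale (a b : X → ℝ) (p : X × ℝ) : X × ℝ := (p.1, p.2 * (b p.1 / a p.1))

variable {a b : X → ℝ}

lemma abs_fiberRescale_snd_le {p : X × ℝ} (hp : |p.2| ≤ a p.1) (hb : 0 ≤ b p.1) :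
    |(fiberRescale a b p).2| ≤ b p.1 := by
  rcases (abs_nonneg _ |>.trans hp).eq_or_lt with ha | ha
  · simp [fiberRescale, ← ha, hb]
  · rw [fiberRescale, abs_mul, abs_of_nonneg (div_nonneg hb ha.le), mul_div_left_comm]
    exact mul_le_of_le_one_right hb ((div_le_one ha).2 hp)

lemma fiberRescale_fiberRescale {p : X × ℝ} (hp : |p.2| ≤ a p.1)
    (hab : 0 < a p.1 → 0 < b p.1) : fiberRescale b a (fiberRescale a b p) = p := by
  rcases (abs_nonneg _ |>.trans hp).eq_or_lt with ha | ha
  · have : p.2 = 0 := abs_nonpos_iff.1 (ha ▸ hp)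
    simp [fiberRescale, this, Prod.ext_iff]
  · have hb := hab ha
    ext
    · rfl
    · simp only [fiberRescale]
      field_simp

variable [TopologicalSpace X]

lemma continuousOn_fiberRescale (ha : Continuous a) (hb : Continuous b) (hb₀ : ∀ x, 0 ≤ b x)
    (hba : ∀ x, 0 < b x → 0 < a x) : ContinuousOn (fiberRescale a b) {p | |p.2| ≤ a p.1} := by
  intro p₀ _
  refine continuous_fst.continuousWithinAt.prodMk ?_
  by_cases ha₀ : a p₀.1 = 0
  · -- the fibre over `p₀.1` is a point, and `|t * (b / a)| ≤ b` squeezes the image to it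
    have hb₀' : b p₀.1 = 0 := (hb₀ _).eq_or_lt.resolve_right (by simpa [ha₀] using hba p₀.1) |>.symm
    have hbound : ∀ᶠ p in 𝓝[{p | |p.2| ≤ a p.1}] p₀, ‖(fiberRescale a b p).2‖ ≤ b p.1 :=
      eventually_nhdsWithin_of_forall fun p hp => abs_fiberRescale_snd_le hp (hb₀ _)
    have hlim : Tendsto (fun p : X × ℝ => b p.1) (𝓝[{p | |p.2| ≤ a p.1}] p₀) (𝓝 0) :=
      hb₀' ▸ (hb.comp continuous_fst).continuousWithinAt
    simpa [ContinuousWithinAt, fiberRescale, ha₀] using squeeze_zero_norm' hbound hlim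
  · exact (continuous_snd.continuousAt.mul ((hb.comp continuous_fst).continuousAt.div
      (ha.comp continuous_fst).continuousAt ha₀)).continuousWithinAt

def Homeomorph.fiberAbsLeRescale (ha : Continuous a) (hb : Continuous b) (ha₀ : ∀ x, 0 ≤ a x)
    (hb₀ : ∀ x, 0 ≤ b x) (hab : ∀ x, 0 < a x ↔ 0 < b x) :
    {p : X × ℝ | |p.2| ≤ a p.1} ≃ₜ {p : X × ℝ | |p.2| ≤ b p.1} :=
  PartialHomeomorph.toHomeomorphSourceTarget
    { toFun := fiberRescale a b
      invFun := fiberRescale b a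
      source := {p | |p.2| ≤ a p.1}
      target := {p | |p.2| ≤ b p.1}
      map_source' := fun _ hp => abs_fiberRescale_snd_le hp (hb₀ _)
      map_target' := fun _ hp => abs_fiberRescale_snd_le hp (ha₀ _)
      left_inv' := fun _ hp => fiberRescale_fiberRescale hp (hab _).1
      right_inv' := fun _ hp => fiberRescale_fiberRescale hp (hab _).2
      continuousOn_toFun := continuousOn_fiberRescale ha hb hb₀ fun x => (hab x).2
      continuousOn_invFun := continuousOn_fiberRescale hb ha ha₀ fun x => (hab x).1 }

def Homeomorph.fiberIccAbsLe {f g : X → ℝ} (hf : Continuous f) (hg : Continuous g) :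
    {p : X × ℝ | p.2 ∈ Icc (f p.1) (g p.1)} ≃ₜ {p : X × ℝ | |p.2| ≤ g p.1 - f p.1} :=
  Homeomorph.subtype
    { toFun := fun p => (p.1, 2 * p.2 - f p.1 - g p.1)
      invFun := fun p => (p.1, (p.2 + f p.1 + g p.1) / 2)
      left_inv := fun p => by ext <;> simp; ring
      right_inv := fun p => by ext <;> simp; ring }
    fun p => by
      simp only [mem_Icc, Homeomorph.homeomorph_mk_coe, Equiv.coe_fn_mk, abs_le]
      constructor <;> intro h <;> constructor <;> linarith [h.1, h.2]

end FiberRescale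

theorem Convex.nonempty_homeomorph_closedBall {E : Type*} [NormedAddCommGroup E]
    [NormedSpace ℝ E] {s : Set E} (hc : Convex ℝ s) (hs : IsClosed s)
    (hne : (interior s).Nonempty) (hb : Bornology.IsBounded s) :
    Nonempty (s ≃ₜ Metric.closedBall (0 : E) 1) := by
  obtain ⟨h, -, hcl, -⟩ := exists_homeomorph_image_interior_closure_frontier_eq_unitBall hc hne hb
  rw [hs.closure_eq] at hcl
  exact ⟨(h.image s).trans (Homeomorph.setCongr hcl)⟩

def hexNorm (x : ℝ × ℝ) : ℝ := max (max |x.1| |x.2|) |x.1 + x.2|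

def hexagon : Set (ℝ × ℝ) := {x | hexNorm x ≤ 1}

lemma mem_hexagon {x : ℝ × ℝ} : x ∈ hexagon ↔ |x.1| ≤ 1 ∧ |x.2| ≤ 1 ∧ |x.1 + x.2| ≤ 1 := by
  simp [hexagon, hexNorm, and_assoc]

lemma hexNorm_lt_one {x : ℝ × ℝ} :
    hexNorm x < 1 ↔ |x.1| < 1 ∧ |x.2| < 1 ∧ |x.1 + x.2| < 1 := by
  simp [hexNorm, and_assoc]

@[fun_prop]
lemma continuous_hexNorm : Continuous hexNorm := by
  unfold hexNorm; fun_prop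

lemma convexOn_hexNorm : ConvexOn ℝ univ hexNorm := by
  have habs (f : ℝ × ℝ →ₗ[ℝ] ℝ) : ConvexOn ℝ univ fun x => |f x| :=
    (convexOn_norm convex_univ).comp_linearMap f
  exact ((habs (.fst ℝ ℝ ℝ)).sup (habs (.snd ℝ ℝ ℝ))).sup (habs (.fst ℝ ℝ ℝ + .snd ℝ ℝ ℝ))

/- `s ≥ flagBot` encodes `v₁, v₃ ≥ 0`, and `s ≤ flagTop` encodes `w₂ ≤ 1 - |d|`, that is
`w₁, w₃ ≥ 0`; the remaining constraints `v₂, w₂ ≥ 0` follow from these. -/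
def flagBot (x : ℝ × ℝ) : ℝ := max 0 (-x.1)

def flagTop (x : ℝ × ℝ) : ℝ := ((1 - x.1) * (1 - |x.2|) - x.1 * max x.2 0) / (2 - |x.2|)

@[fun_prop]
lemma continuous_flagBot : Continuous flagBot := by
  unfold flagBot; fun_prop

lemma continuousOn_flagTop : ContinuousOn flagTop hexagon :=
  ContinuousOn.div (by fun_prop) (by fun_prop) fun _ hx => by linarith [(mem_hexagon.1 hx).2.1]

lemma flagTop_le {x : ℝ × ℝ} (hx : x ∈ hexagon) : flagTop x ≤ (1 - x.1) / 2 := by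
  obtain ⟨q, d⟩ := x
  simp only [mem_hexagon, abs_le] at hx
  obtain ⟨⟨hq, hq'⟩, ⟨hd, hd'⟩, -⟩ := hx
  rw [flagTop, div_le_div_iff₀ (by linarith [abs_le.2 ⟨hd, hd'⟩]) two_pos]
  rcases le_total 0 d with h | h <;> simp [abs_of_nonneg, abs_of_nonpos, h] <;> nlinarith

/- On the four sign quadrants of `(q, d)`, `(flagTop - flagBot) * (2 - |d|)` is
`1 - q - d`, `(1 + q) * (1 - d)`, `(1 - q) * (1 + d)` and `1 + q + d`: it vanishes exactly
on the sides of the hexagon. -/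
lemma flagBot_le_flagTop {x : ℝ × ℝ} (hx : x ∈ hexagon) : flagBot x ≤ flagTop x := by
  obtain ⟨q, d⟩ := x
  simp only [mem_hexagon, abs_le] at hx
  obtain ⟨⟨hq, hq'⟩, ⟨hd, hd'⟩, ⟨hqd, hqd'⟩⟩ := hx
  rw [flagBot, flagTop, le_div_iff₀ (by linarith [abs_le.2 ⟨hd, hd'⟩])]
  rcases le_total 0 q with h | h <;> rcases le_total 0 d with h' | h' <;>
    simp [abs_of_nonneg, abs_of_nonpos, h, h'] <;> nlinarith

lemma flagBot_lt_flagTop_iff {x : ℝ × ℝ} (hx : x ∈ hexagon) :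
    flagBot x < flagTop x ↔ hexNorm x < 1 := by
  obtain ⟨q, d⟩ := x
  simp only [mem_hexagon, abs_le] at hx
  obtain ⟨⟨hq, hq'⟩, ⟨hd, hd'⟩, ⟨hqd, hqd'⟩⟩ := hx
  rw [hexNorm_lt_one, flagBot, flagTop, lt_div_iff₀ (by linarith [abs_le.2 ⟨hd, hd'⟩])]
  simp only [abs_lt]
  rcases le_total 0 q with h | h <;> rcases le_total 0 d with h' | h' <;>
    simp [abs_of_nonneg, abs_of_nonpos, h, h'] <;> constructor <;> intro <;>
    (try refine ⟨⟨?_, ?_⟩, ⟨?_, ?_⟩, ⟨?_, ?_⟩⟩) <;> nlinarith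

def flagCoords (x : EuclideanSpace ℝ (Fin 6)) : ℝ × ℝ := (x 0 - x 2, x 3 - x 5)

/-- `w` is `w₂`, solved from `v₁w₁ - v₂w₂ + v₃w₃ = 0` with `w₁ = (1 - w₂ + d) / 2`,
`w₃ = (1 - w₂ - d) / 2`. -/
def flagOfCoords (x : ℝ × ℝ) (s : ℝ) : EuclideanSpace ℝ (Fin 6) :=
  let w := (2 * s + x.1 + x.1 * x.2) / (2 - 2 * s - x.1)
  !₂[s + x.1, 1 - 2 * s - x.1, s, (1 - w + x.2) / 2, w, (1 - w - x.2) / 2]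

section FlagCoords

variable {x : EuclideanSpace ℝ (Fin 6)}

lemma flagCoords_mem_hexagon (hx : x ∈ tnnFlag) : flagCoords x ∈ hexagon := by
  obtain ⟨hv, hw, hvw, h⟩ := hx
  have := h 0; have := h 1; have := h 2; have := h 3; have := h 4; have := h 5
  simp only [mem_hexagon, flagCoords, abs_le]
  refine ⟨⟨?_, ?_⟩, ⟨?_, ?_⟩, ⟨?_, ?_⟩⟩ <;>
    nlinarith [mul_nonneg (h 0) (h 3), mul_nonneg (h 1) (h 3), mul_nonneg (h 2) (h 5),
      mul_nonneg (h 1) (h 5), mul_nonneg (h 0) (h 5), mul_nonneg (h 2) (h 3)]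

lemma mem_Icc_flagBot_flagTop (hx : x ∈ tnnFlag) :
    x 2 ∈ Icc (flagBot (flagCoords x)) (flagTop (flagCoords x)) := by
  have hhex := flagCoords_mem_hexagon hx
  obtain ⟨hv, hw, hvw, h⟩ := hx
  have := h 0; have := h 1; have := h 2; have := h 3; have := h 4; have := h 5
  simp only [mem_hexagon, flagCoords, abs_le] at hhex
  refine ⟨max_le (h 2) (by simp [flagCoords]; linarith), ?_⟩
  rw [flagTop, le_div_iff₀ (by simp [flagCoords]; linarith [abs_le.2 hhex.2.1])]
  simp only [flagCoords]
  rcases le_total 0 (x 3 - x 5) with h' | h' <;> simp [abs_of_nonneg, abs_of_nonpos, h'] <;>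
    nlinarith [mul_nonneg (h 0) (h 3), mul_nonneg (h 1) (h 3), mul_nonneg (h 2) (h 5),
      mul_nonneg (h 1) (h 5), mul_nonneg (h 0) (h 5), mul_nonneg (h 2) (h 3)]

lemma flagOfCoords_flagCoords (hx : x ∈ tnnFlag) : flagOfCoords (flagCoords x) (x 2) = x := by
  obtain ⟨hv, hw, hvw, h⟩ := hx
  have hw₂ : (2 * x 2 + (x 0 - x 2) + (x 0 - x 2) * (x 3 - x 5)) / (2 - 2 * x 2 - (x 0 - x 2))
      = x 4 := by
    rw [div_eq_iff (by linarith [h 1])]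
    linear_combination (1 + x 4 - x 3 - x 5) * hv + (x 1 - 1) * hw + 2 * hvw
  ext i
  fin_cases i <;> simp [flagOfCoords, flagCoords, hw₂] <;> linarith

end FlagCoords

lemma flagCoords_flagOfCoords (y : ℝ × ℝ) (s : ℝ) : flagCoords (flagOfCoords y s) = y := by
  ext <;> simp [flagCoords, flagOfCoords]; ring

@[simp]
lemma flagOfCoords_two (y : ℝ × ℝ) (s : ℝ) : flagOfCoords y s 2 = s := by
  simp [flagOfCoords]

lemma flagOfCoords_mem {y : ℝ × ℝ} {s : ℝ} (hy : y ∈ hexagon)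
    (hs : s ∈ Icc (flagBot y) (flagTop y)) : flagOfCoords y s ∈ tnnFlag := by
  obtain ⟨q, d⟩ := y
  have htop := hs.2.trans (flagTop_le hy)
  simp only [mem_hexagon, abs_le] at hy
  obtain ⟨⟨hq, hq'⟩, ⟨hd, hd'⟩, ⟨hqd, hqd'⟩⟩ := hy
  obtain ⟨hbot, hs⟩ := hs
  rw [flagTop, le_div_iff₀ (by linarith [abs_le.2 ⟨hd, hd'⟩])] at hs
  simp only [flagBot, max_le_iff] at hbot
  have hden : 0 < 2 - 2 * s - q := by linarith
  set w := (2 * s + q + q * d) / (2 - 2 * s - q) with hw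
  have hw' : w * (2 - 2 * s - q) = 2 * s + q + q * d := div_mul_cancel₀ _ hden.ne'
  have hw₀ : 0 ≤ w := div_nonneg (by rcases le_total 0 q with h | h <;> nlinarith) hden.le
  have hw₁ : w ≤ 1 - |d| := by
    rw [hw, div_le_iff₀ hden]
    rcases le_total 0 d with h | h <;> simp [abs_of_nonneg, abs_of_nonpos, h] at hs ⊢ <;>
      nlinarith
  refine ⟨?_, ?_, ?_, fun i => ?_⟩
  · simp [flagOfCoords]; ring
  · simp [flagOfCoords, ← hw]; ring
  · simp [flagOfCoords, ← hw]; linear_combination (-1/2 : ℝ) * hw'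
  · fin_cases i <;> simp [flagOfCoords, ← hw] <;> linarith [neg_abs_le d, le_abs_self d]

lemma continuousOn_flagOfCoords : ContinuousOn (fun p : hexagon × ℝ => flagOfCoords p.1 p.2)
    {p | p.2 ∈ Icc (flagBot p.1) (flagTop p.1)} := by
  have hw : ContinuousOn (fun p : hexagon × ℝ =>
      (2 * p.2 + p.1.1.1 + p.1.1.1 * p.1.1.2) / (2 - 2 * p.2 - p.1.1.1))
      {p | p.2 ∈ Icc (flagBot p.1) (flagTop p.1)} :=
    ContinuousOn.div (by fun_prop) (by fun_prop) fun p hp => by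
      linarith [hp.2.trans (flagTop_le p.1.2)]
  simp only [flagOfCoords]
  fun_prop (disch := assumption)

def flagHomeomorph : tnnFlag ≃ₜ {p : hexagon × ℝ | p.2 ∈ Icc (flagBot p.1) (flagTop p.1)} where
  toFun x := ⟨(⟨flagCoords x, flagCoords_mem_hexagon x.2⟩, x.1 2), mem_Icc_flagBot_flagTop x.2⟩
  invFun p := ⟨flagOfCoords p.1.1 p.1.2, flagOfCoords_mem p.1.1.2 p.2⟩
  left_inv x := Subtype.ext (flagOfCoords_flagCoords x.2)
  right_inv p := by ext <;> simp [flagCoords_flagOfCoords]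
  continuous_toFun :=
    (((by unfold flagCoords; fun_prop : Continuous fun x : tnnFlag => flagCoords x).subtype_mk
      _).prodMk (by fun_prop)).subtype_mk _
  continuous_invFun := continuousOn_flagOfCoords.domRestrict.subtype_mk _

def hexConeGauge (y : EuclideanSpace ℝ (Fin 3)) : ℝ := hexNorm (y 0, y 1) + |y 2|

def hexCone : Set (EuclideanSpace ℝ (Fin 3)) := {y | hexConeGauge y ≤ 1}

lemma mem_hexCone {y : EuclideanSpace ℝ (Fin 3)} :
    y ∈ hexCone ↔ hexNorm (y 0, y 1) + |y 2| ≤ 1 := Iff.rfl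

lemma continuous_hexConeGauge : Continuous hexConeGauge := by
  unfold hexConeGauge; fun_prop

lemma convex_hexCone : Convex ℝ hexCone := by
  let π (i : Fin 3) : EuclideanSpace ℝ (Fin 3) →ₗ[ℝ] ℝ := (EuclideanSpace.proj i).toLinearMap
  have hconv : ConvexOn ℝ univ hexConeGauge :=
    (convexOn_hexNorm.comp_linearMap ((π 0).prod (π 1))).add
      ((convexOn_norm convex_univ).comp_linearMap (π 2))
  simpa [hexCone] using hconv.convex_le 1

lemma isClosed_hexCone : IsClosed hexCone :=
  isClosed_le continuous_hexConeGauge continuous_const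

lemma zero_mem_interior_hexCone : (0 : EuclideanSpace ℝ (Fin 3)) ∈ interior hexCone :=
  mem_interior.2 ⟨{y | hexConeGauge y < 1}, fun _ (hy : hexConeGauge _ < 1) => hy.le,
    isOpen_lt continuous_hexConeGauge continuous_const, by simp [hexConeGauge, hexNorm]⟩

lemma isBounded_hexCone : Bornology.IsBounded hexCone := by
  refine ((PiLp.antilipschitzWith_ofLp 2 _).isBounded_preimage
    (Metric.isBounded_closedBall (x := 0) (r := 1))).subset fun y hy => ?_
  have h₀ : |y 0| ≤ hexNorm (y 0, y 1) := (le_max_left _ _).trans (le_max_left _ _)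
  have h₁ : |y 1| ≤ hexNorm (y 0, y 1) := (le_max_right _ _).trans (le_max_left _ _)
  have := mem_hexCone.1 hy
  simp only [mem_preimage, Metric.mem_closedBall, dist_zero_right,
    pi_norm_le_iff_of_nonneg zero_le_one, Real.norm_eq_abs]
  intro i
  fin_cases i <;> simp <;> linarith [abs_nonneg (y 0), abs_nonneg (y 2)]

def hexConeHomeomorph : {p : hexagon × ℝ | |p.2| ≤ 1 - hexNorm p.1} ≃ₜ hexCone where
  toFun p := ⟨!₂[p.1.1.1.1, p.1.1.1.2, p.1.2], by
    simp [mem_hexCone]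
    linarith [p.2.out]⟩
  invFun y := ⟨(⟨(y.1 0, y.1 1), by
      show hexNorm _ ≤ 1
      linarith [abs_nonneg (y.1 2), mem_hexCone.1 y.2]⟩, y.1 2), by
    show |y.1 2| ≤ 1 - hexNorm (y.1 0, y.1 1)
    linarith [mem_hexCone.1 y.2]⟩
  left_inv p := by ext <;> simp
  right_inv y := by ext i; fin_cases i <;> simp
  continuous_toFun := by fun_prop
  continuous_invFun := by fun_prop

end

theorem tnnFlag_homeomorphic_closedBall :
    Nonempty (tnnFlag ≃ₜ Metric.closedBall (0 : EuclideanSpace ℝ (Fin 3)) 1) := by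
  obtain ⟨toBall⟩ := convex_hexCone.nonempty_homeomorph_closedBall isClosed_hexCone
    ⟨0, zero_mem_interior_hexCone⟩ isBounded_hexCone
  have hbot : Continuous fun x : hexagon => flagBot x := by fun_prop
  have htop : Continuous fun x : hexagon => flagTop x := continuousOn_flagTop.domRestrict
  have hμ : Continuous fun x : hexagon => 1 - hexNorm x := by fun_prop
  have hwidth_pos (x : hexagon) : 0 < flagTop x - flagBot x ↔ 0 < 1 - hexNorm x := by
    simpa only [sub_pos] using flagBot_lt_flagTop_iff x.2
  exact ⟨flagHomeomorph.trans <| (Homeomorph.fiberIccAbsLe hbot htop).trans <|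
    (Homeomorph.fiberAbsLeRescale (htop.sub hbot) hμ
      (fun x => sub_nonneg.2 (flagBot_le_flagTop x.2)) (fun x => sub_nonneg.2 x.2)
      hwidth_pos).trans <| hexConeHomeomorph.trans toBall⟩
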